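/- arXiv:1711.08409 — 2 statements merged into one kernel-verified Lean document; each statement's English description precedes it below -/
import Mathlib

section
/- Let A be a good bounded pseudo-hoop and F a filter of A. Then F is involutive if and only if for all x, y ∈ A: (y^- ⇝ x^-) → (x → y) ∈ F and (y^∼ → x^∼) ⇝ (x ⇝ y) ∈ F. -/
universe u v

class PseudoHoop (A : Type u) extends One A, Mul A where
  rimp : A → A → A
  limp : A → A → A
  mul_one' : ∀ x : A, x * 1 = x
  one_mul' : ∀ x : A, 1 * x = x
  rimp_self : ∀ x : A, rimp x x = 1
  limp_self : ∀ x : A, limp x x = 1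
  mul_rimp : ∀ x y z : A, rimp (x * y) z = rimp x (rimp y z)
  mul_limp : ∀ x y z : A, limp (x * y) z = limp y (limp x z)
  div₁ : ∀ x y : A, (rimp x y) * x = (rimp y x) * y
  div₂ : ∀ x y : A, (rimp x y) * x = x * (limp x y)
  div₃ : ∀ x y : A, x * (limp x y) = y * (limp y x)

namespace PseudoHoop

/-- The order on a pseudo-hoop: `x ≤ y` iff `x → y = 1`. -/
def ple {A : Type u} [PseudoHoop A] (x y : A) : Prop := rimp x y = 1

/-- The meet `x ∧ y = (x → y) ⊙ x`. -/
def meet {A : Type u} [PseudoHoop A] (x y : A) : A := (rimp x y) * x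

/-- `x ∨₁ y = (x → y) ⇝ y`. -/
def join₁ {A : Type u} [PseudoHoop A] (x y : A) : A := limp (rimp x y) y

/-- `x ∨₂ y = (x ⇝ y) → y`. -/
def join₂ {A : Type u} [PseudoHoop A] (x y : A) : A := rimp (limp x y) y

/-- Iterated implication: `x →⁰ y = y`, `x →ⁿ⁺¹ y = x → (x →ⁿ y)`. -/
def rimpPow {A : Type u} [PseudoHoop A] (x : A) : ℕ → A → A
  | 0, y => y
  | n + 1, y => rimp x (rimpPow x n y)

/-- A filter of a pseudo-hoop. -/
structure IsFilter {A : Type u} [PseudoHoop A] (F : Set A) : Prop where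
  nonempty : F.Nonempty
  mul_mem : ∀ {x y : A}, x ∈ F → y ∈ F → x * y ∈ F
  upward : ∀ {x y : A}, x ∈ F → ple x y → y ∈ F

/-- A normal filter: `x → y ∈ F` iff `x ⇝ y ∈ F`. -/
def IsNormalFilter {A : Type u} [PseudoHoop A] (F : Set A) : Prop :=
  IsFilter F ∧ ∀ x y : A, rimp x y ∈ F ↔ limp x y ∈ F

def IsProper {A : Type u} [PseudoHoop A] (F : Set A) : Prop := F ≠ Set.univ

/-- A pseudo-hoop is simple if `{1}` is its unique proper filter. -/
def IsSimple (A : Type u) [PseudoHoop A] : Prop :=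
  ∀ F : Set A, IsFilter F → IsProper F → F = {1}

/-- A pseudo-hoop is Wajsberg if `x ∨₁ y = y ∨₁ x` and `x ∨₂ y = y ∨₂ x`. -/
def IsWajsberg (A : Type u) [PseudoHoop A] : Prop :=
  ∀ x y : A, join₁ x y = join₁ y x ∧ join₂ x y = join₂ y x

/-- A fantastic filter. -/
def IsFantasticFilter {A : Type u} [PseudoHoop A] (F : Set A) : Prop :=
  IsFilter F ∧ ∀ x y : A,
    (rimp y x ∈ F → rimp (join₁ x y) x ∈ F) ∧
    (limp y x ∈ F → limp (join₂ x y) x ∈ F)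

def IS₂ {A : Type u} [PseudoHoop A] (μ : A → A) : Prop :=
  ∀ x y : A, μ (x * y) = μ x * μ (limp x (x * y)) ∧
    μ (x * y) = μ (rimp y (x * y)) * μ y

def IS₃ {A : Type u} [PseudoHoop A] (μ : A → A) : Prop :=
  ∀ x y : A, μ (μ x * μ y) = μ x * μ y

def IS₄ {A : Type u} [PseudoHoop A] (μ : A → A) : Prop :=
  ∀ x y : A, μ (rimp (μ x) (μ y)) = rimp (μ x) (μ y) ∧
    μ (limp (μ x) (μ y)) = limp (μ x) (μ y)

/-- Type I state operator. -/
def IsStateI {A : Type u} [PseudoHoop A] (μ : A → A) : Prop :=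
  (∀ x y : A, μ (rimp x y) = rimp (μ (join₁ x y)) (μ y) ∧
      μ (limp x y) = limp (μ (join₂ x y)) (μ y)) ∧ IS₂ μ ∧ IS₃ μ ∧ IS₄ μ

/-- Type II state operator. -/
def IsStateII {A : Type u} [PseudoHoop A] (μ : A → A) : Prop :=
  (∀ x y : A, μ (rimp x y) = rimp (μ (join₁ y x)) (μ y) ∧
      μ (limp x y) = limp (μ (join₂ y x)) (μ y)) ∧ IS₂ μ ∧ IS₃ μ ∧ IS₄ μ

/-- Type III state operator. -/
def IsStateIII {A : Type u} [PseudoHoop A] (μ : A → A) : Prop :=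
  (∀ x y : A, μ (rimp x y) = rimp (μ x) (μ (meet x y)) ∧
      μ (limp x y) = limp (μ x) (μ (meet x y))) ∧ IS₂ μ ∧ IS₃ μ ∧ IS₄ μ

end PseudoHoop

open PseudoHoop

/-- A bounded pseudo-hoop: a pseudo-hoop with a least element `0`. -/
class BoundedPseudoHoop (A : Type u) extends PseudoHoop A, Zero A where
  zero_le : ∀ x : A, rimp 0 x = 1

namespace BoundedPseudoHoop

/-- `x⁻ = x → 0`. -/
def negr {A : Type u} [BoundedPseudoHoop A] (x : A) : A := rimp x 0

/-- `x∼ = x ⇝ 0`. -/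
def negl {A : Type u} [BoundedPseudoHoop A] (x : A) : A := limp x 0

/-- A bounded pseudo-hoop is good if `x⁻∼ = x∼⁻` for all `x`. -/
def IsGood (A : Type u) [BoundedPseudoHoop A] : Prop :=
  ∀ x : A, negl (negr x) = negr (negl x)

/-- A bounded pseudo-hoop is involutive if `x⁻∼ = x∼⁻ = x` for all `x`. -/
def IsInvolutive (A : Type u) [BoundedPseudoHoop A] : Prop :=
  ∀ x : A, negl (negr x) = x ∧ negr (negl x) = x

/-- The set of dense elements. -/
def Den (A : Type u) [BoundedPseudoHoop A] : Set A :=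
  {x : A | negl (negr x) = 1}

/-- An involutive filter: `x⁻∼ → x ∈ F` and `x∼⁻ ⇝ x ∈ F` for all `x`. -/
def IsInvolutiveFilter {A : Type u} [BoundedPseudoHoop A] (F : Set A) : Prop :=
  IsFilter F ∧ ∀ x : A, rimp (negl (negr x)) x ∈ F ∧ limp (negr (negl x)) x ∈ F

end BoundedPseudoHoop

open BoundedPseudoHoop

/-!
By exchange, `y⁻ ⇝ x⁻ = x → y⁻∼`, so the forward direction is transitivity of implication,
`y⁻∼ → y ≤ (x → y⁻∼) → (x → y)`, and symmetrically for `⇝`. Conversely, taking `x := y⁻∼`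
turns `y⁻ ⇝ x⁻` into `y⁻ ⇝ y⁻ = 1` because `y⁻∼⁻ = y⁻`, and `1 → y = y`.
-/

namespace PseudoHoop

variable {A : Type u} [PseudoHoop A] {x y : A}

theorem ple_def : ple x y ↔ rimp x y = 1 := Iff.rfl

theorem ple_iff_limp_eq_one : ple x y ↔ limp x y = 1 := by
  have h := div₂ x y
  constructor
  · intro hxy
    rw [ple_def.mp hxy, one_mul'] at h
    have h' := mul_limp x (limp x y) y
    rwa [← h, limp_self] at h'
  · intro hxy
    rw [hxy, mul_one'] at h
    have h' := mul_rimp (rimp x y) x y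
    rwa [h, rimp_self] at h'

theorem ple_antisymm (hxy : ple x y) (hyx : ple y x) : x = y := by
  have h := div₁ x y
  rwa [ple_def.mp hxy, ple_def.mp hyx, one_mul', one_mul'] at h

protected theorem mul_assoc (a b c : A) : a * b * c = a * (b * c) := by
  have h : ∀ z : A, rimp (a * b * c) z = rimp (a * (b * c)) z := by
    intro z
    simp only [mul_rimp]
  exact ple_antisymm (by rw [ple, h, rimp_self]) (by rw [ple, ← h, rimp_self])

theorem rimp_mul_ple (x y : A) : ple (rimp x y * x) y := by
  rw [ple, mul_rimp, rimp_self]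

theorem mul_limp_ple (x y : A) : ple (x * limp x y) y := by
  rw [ple_iff_limp_eq_one, mul_limp, limp_self]

end PseudoHoop

namespace BoundedPseudoHoop

variable {A : Type u} [BoundedPseudoHoop A] {x y z : A}

theorem zero_ple (x : A) : ple 0 x := zero_le x

theorem rimp_one (x : A) : rimp x 1 = 1 := by
  have h : limp (x * 0) 0 = 1 := by
    rw [mul_limp]
    exact ple_iff_limp_eq_one.mp (zero_ple _)
  rwa [← ple_iff_limp_eq_one, ple, mul_rimp, rimp_self] at h

theorem one_rimp (x : A) : rimp 1 x = x := by
  have h := div₁ (1 : A) x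
  rwa [rimp_one, one_mul', mul_one'] at h

theorem limp_one (x : A) : limp x 1 = 1 := ple_iff_limp_eq_one.mp (rimp_one x)

theorem one_limp (x : A) : limp 1 x = x := by
  have h := div₃ (1 : A) x
  rwa [limp_one, one_mul', mul_one'] at h

theorem ple_trans (hxy : ple x y) (hyz : ple y z) : ple x z := by
  have h := div₁ x y
  rw [ple_def.mp hxy, one_mul'] at h
  rw [ple, h, mul_rimp, hyz, rimp_one]

theorem mul_ple_mul_left (a : A) (h : ple x y) : ple (a * x) (a * y) := by
  rw [ple_iff_limp_eq_one, mul_limp, ← ple_iff_limp_eq_one]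
  refine ple_trans h ?_
  rw [ple_iff_limp_eq_one, ← mul_limp, limp_self]

theorem mul_ple_mul_right (a : A) (h : ple x y) : ple (x * a) (y * a) := by
  rw [ple, mul_rimp]
  refine ple_trans h ?_
  rw [ple, ← mul_rimp, rimp_self]

theorem rimp_limp_comm (a b c : A) : rimp a (limp b c) = limp b (rimp a c) := by
  refine ple_antisymm ?_ ?_
  · rw [ple_iff_limp_eq_one, ← mul_limp, ← ple_iff_limp_eq_one, ple, ← mul_rimp,
      PseudoHoop.mul_assoc]
    exact ple_trans (mul_ple_mul_left b (rimp_mul_ple a _)) (mul_limp_ple b c)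
  · rw [ple_def, ← mul_rimp, ← ple_def, ple_iff_limp_eq_one, ← mul_limp,
      ← PseudoHoop.mul_assoc, ← ple_iff_limp_eq_one]
    exact ple_trans (mul_ple_mul_right a (mul_limp_ple b _)) (rimp_mul_ple a c)

theorem rimp_ple_rimp_rimp (x y z : A) : ple (rimp y z) (rimp (rimp x y) (rimp x z)) := by
  rw [ple, ← mul_rimp, ← mul_rimp, PseudoHoop.mul_assoc]
  exact ple_trans (mul_ple_mul_left _ (rimp_mul_ple x y)) (rimp_mul_ple y z)

theorem limp_ple_limp_limp (x y z : A) : ple (limp y z) (limp (limp x y) (limp x z)) := by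
  rw [ple_iff_limp_eq_one, ← mul_limp, ← mul_limp, ← PseudoHoop.mul_assoc,
    ← ple_iff_limp_eq_one]
  exact ple_trans (mul_ple_mul_right _ (mul_limp_ple x y)) (mul_limp_ple y z)

theorem limp_negr_negr (x y : A) : limp (negr y) (negr x) = rimp x (negl (negr y)) :=
  (rimp_limp_comm x (negr y) 0).symm

theorem rimp_negl_negl (x y : A) : rimp (negl y) (negl x) = limp x (negr (negl y)) :=
  rimp_limp_comm (negl y) x 0

theorem ple_negl_negr (x : A) : ple x (negl (negr x)) := by
  rw [ple, negl, negr, rimp_limp_comm, limp_self]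

theorem ple_negr_negl (x : A) : ple x (negr (negl x)) := by
  rw [ple, negr, negl, ← mul_rimp]
  exact mul_limp_ple x 0

theorem negr_antitone (h : ple x y) : ple (negr y) (negr x) := by
  rw [ple, negr, negr, ← mul_rimp]
  exact ple_trans (mul_ple_mul_left _ h) (rimp_mul_ple y 0)

theorem negl_antitone (h : ple x y) : ple (negl y) (negl x) := by
  rw [ple_iff_limp_eq_one, negl, negl, ← mul_limp, ← ple_iff_limp_eq_one]
  exact ple_trans (mul_ple_mul_right _ h) (mul_limp_ple y 0)

theorem negr_negl_negr (x : A) : negr (negl (negr x)) = negr x :=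
  ple_antisymm (negr_antitone (ple_negl_negr x)) (ple_negr_negl (negr x))

theorem negl_negr_negl (x : A) : negl (negr (negl x)) = negl x :=
  ple_antisymm (negl_antitone (ple_negr_negl x)) (ple_negl_negr (negl x))

end BoundedPseudoHoop

theorem stmt13_general {A : Type u} [BoundedPseudoHoop A]
    (F : Set A) (hF : IsFilter F) :
    IsInvolutiveFilter F ↔ ∀ x y : A,
      rimp (limp (negr y) (negr x)) (rimp x y) ∈ F ∧
      limp (rimp (negl y) (negl x)) (limp x y) ∈ F := by
  constructor
  · rintro ⟨-, hinv⟩ x y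
    rw [limp_negr_negr, rimp_negl_negl]
    exact ⟨hF.upward (hinv y).1 (rimp_ple_rimp_rimp x _ y),
      hF.upward (hinv y).2 (limp_ple_limp_limp x _ y)⟩
  · intro h
    refine ⟨hF, fun x => ⟨?_, ?_⟩⟩
    · simpa only [negr_negl_negr, limp_self, one_rimp] using (h (negl (negr x)) x).1
    · simpa only [negl_negr_negl, rimp_self, one_limp] using (h (negr (negl x)) x).2

theorem stmt13 {A : Type u} [BoundedPseudoHoop A] (hg : IsGood A)
    (F : Set A) (hF : IsFilter F) :
    IsInvolutiveFilter F ↔ ∀ x y : A,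
      rimp (limp (negr y) (negr x)) (rimp x y) ∈ F ∧
      limp (rimp (negl y) (negl x)) (limp x y) ∈ F :=
  stmt13_general F hF
end

section
/- If A is a bounded Wajsberg pseudo-hoop, then every Boolean filter of A (a filter F with x ∨ x^- ∈ F and x ∨ x^∼ ∈ F for all x) is an involutive filter. -/
universe u v

open PseudoHoop

open BoundedPseudoHoop

/-! In a bounded Wajsberg pseudo-hoop the commutativity `x ∨ 0 = 0 ∨ x` reads
`x⁻∼ = (x → 0) ⇝ 0 = (0 → x) ⇝ x = 1 ⇝ x = x`, and dually `x∼⁻ = x`. So the pseudo-hoop is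
involutive, the elements `x⁻∼ → x` and `x∼⁻ ⇝ x` are `1`, and they lie in every filter. -/

namespace PseudoHoop

variable {A : Type u} [PseudoHoop A]

/-- Reversing the multiplication swaps `→` and `⇝`, so lemmas about `→` transfer to `⇝`. -/
def Dual (A : Type u) : Type u := A

instance : PseudoHoop (Dual A) where
  one := (1 : A)
  mul := flip (Mul.mul (α := A))
  rimp := limp (A := A)
  limp := rimp (A := A)
  mul_one' := one_mul' (A := A)
  one_mul' := mul_one' (A := A)
  rimp_self := limp_self (A := A)
  limp_self := rimp_self (A := A)
  mul_rimp x y z := mul_limp (A := A) y x z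
  mul_limp x y z := mul_rimp (A := A) y x z
  div₁ := div₃ (A := A)
  div₂ x y := (div₂ (A := A) x y).symm
  div₃ := div₁ (A := A)

theorem eq_of_rimp_eq_one {x y : A} (hxy : rimp x y = 1) (hyx : rimp y x = 1) : x = y :=
  calc x = rimp x y * x := by rw [hxy, one_mul']
    _ = rimp y x * y := div₁ x y
    _ = y := by rw [hyx, one_mul']

theorem one_rimp_eq_rimp_one_mul (x : A) : rimp 1 x = rimp x 1 * x := by
  simpa only [mul_one'] using div₁ 1 x

theorem one_rimp (x : A) : rimp 1 x = x := by
  have rimp_eq_one_rimp : ∀ y z : A, rimp y z = rimp 1 (rimp y z) := fun y z => by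
    simpa only [one_mul'] using mul_rimp 1 y z
  have rimp_one_rimp_one : ∀ y : A, rimp (rimp 1 y) 1 = 1 := fun y => by
    rw [one_rimp_eq_rimp_one_mul, mul_rimp, rimp_self]
  apply eq_of_rimp_eq_one
  · rw [one_rimp_eq_rimp_one_mul, mul_rimp, rimp_self, rimp_eq_one_rimp x 1, rimp_one_rimp_one]
  · simpa only [mul_one', rimp_self] using (mul_rimp x 1 x).symm

theorem rimp_one (x : A) : rimp x 1 = 1 := by
  rw [← one_rimp x, one_rimp_eq_rimp_one_mul, mul_rimp, rimp_self]

theorem one_limp (x : A) : limp 1 x = x := one_rimp (A := Dual A) x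

theorem limp_one (x : A) : limp x 1 = 1 := rimp_one (A := Dual A) x

theorem limp_eq_one_of_ple {x y : A} (h : ple x y) : limp x y = 1 := by
  have hx : x = y * limp y x :=
    calc x = rimp x y * x := by rw [h, one_mul']
      _ = x * limp x y := div₂ x y
      _ = y * limp y x := div₃ x y
  rw [hx, mul_limp, limp_self, limp_one]

theorem IsFilter.one_mem {F : Set A} (hF : IsFilter F) : (1 : A) ∈ F :=
  let ⟨a, ha⟩ := hF.nonempty
  hF.upward ha (rimp_one a)

end PseudoHoop

namespace BoundedPseudoHoop

variable {A : Type u} [BoundedPseudoHoop A]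

theorem zero_limp (x : A) : limp 0 x = 1 := limp_eq_one_of_ple (zero_le x)

theorem isInvolutive_of_isWajsberg (hw : IsWajsberg A) : IsInvolutive A := fun x =>
  ⟨by simpa only [negr, negl, join₁, zero_le, one_limp] using (hw x 0).1,
    by simpa only [negr, negl, join₂, zero_limp, one_rimp] using (hw x 0).2⟩

theorem IsInvolutive.isInvolutiveFilter (hA : IsInvolutive A) {F : Set A} (hF : IsFilter F) :
    IsInvolutiveFilter F :=
  ⟨hF, fun x => by simpa only [(hA x).1, (hA x).2, rimp_self, limp_self, and_self] using hF.one_mem⟩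

end BoundedPseudoHoop

theorem stmt16_general {A : Type u} [BoundedPseudoHoop A] (hw : IsWajsberg A)
    (F : Set A) (hF : IsFilter F) :
    IsInvolutiveFilter F :=
  (isInvolutive_of_isWajsberg hw).isInvolutiveFilter hF

theorem stmt16 {A : Type u} [BoundedPseudoHoop A] (hw : IsWajsberg A)
    (F : Set A) (hF : IsFilter F)
    (hB : ∀ x : A, join₁ x (negr x) ∈ F ∧ join₁ x (negl x) ∈ F) :
    IsInvolutiveFilter F :=
  stmt16_general hw F hF
end
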